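/- Let E be a real inner product space and let F : E → ℝ be differentiable, μ-strongly convex and L-smooth, with global minimizer w* ∈ E. Fix real parameters with 0 < μ, 0 < L, 0 ≤ α < 1, ψ > 0, ρ > 0, γ > 0, 0 < η ≤ min{1/(4L), 1/μ}, and γ ≤ ρ/(L·ψ·(1−α)). Let w⁰ ∈ E and for each t = 0, 1, …, T−1 define w^{t+½} = wᵗ − η∇F(wᵗ) and w^{t+1} = w^{t+½} + (1−α)·uᵗ, where uᵗ ∈ E satisfies ‖uᵗ‖ ≤ γψ, and assume ‖w^{t+½}‖ ≤ ψ and ‖∇F(wᵗ)‖ ≤ ρ for all t. Then F(w^T) − F(w*) ≤ (1−μη)^T · (F(w⁰) − F(w*)) + 2γρψ(1−α)/(μη). -/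

import Mathlib

open RealInnerProductSpace

/-! Smoothness gives the descent lemma, so a gradient step perturbed by `v` lowers `F` by
`η/2 ‖∇F‖²` up to an error `2ρ‖v‖`. Strong convexity gives the Polyak–Łojasiewicz inequality
`2μ (F x - F w*) ≤ ‖∇F x‖²`, which turns this into the contraction
`F wᵗ⁺¹ - F w* ≤ (1 - μη) (F wᵗ - F w*) + 2γρψ(1 - α)` of the optimality gap, since
`‖(1 - α) uᵗ‖ ≤ (1 - α)γψ`. Unrolling the contraction sums a geometric series. -/

section

variable {E : Type*} [NormedAddCommGroup E] [InnerProductSpace ℝ E] {F : E → ℝ} {F' : E → E}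
  {μ L : ℝ}

theorem two_mul_sub_le_norm_sq_of_stronglyConvex
    (hconvex : ∀ x y, F x + ⟪F' x, y - x⟫ + μ / 2 * ‖y - x‖ ^ 2 ≤ F y) (hμ : 0 < μ) (x z : E) :
    2 * μ * (F x - F z) ≤ ‖F' x‖ ^ 2 := by
  have hinner : -(‖F' x‖ * ‖z - x‖) ≤ ⟪F' x, z - x⟫ :=
    neg_le_of_abs_le (abs_real_inner_le_norm _ _)
  nlinarith [hconvex x z, sq_nonneg (μ * ‖z - x‖ - ‖F' x‖)]

theorem descent_lemma
    (hdiff : ∀ x, HasFDerivAt F (InnerProductSpace.toDualMap ℝ E (F' x) : E →L[ℝ] ℝ) x)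
    (hsmooth : ∀ x y, ‖F' x - F' y‖ ≤ L * ‖x - y‖) (x y : E) :
    F y ≤ F x + ⟪F' x, y - x⟫ + L / 2 * ‖y - x‖ ^ 2 := by
  set v := y - x
  -- the gap between `F` and its quadratic upper model along the segment decreases
  let g : ℝ → ℝ := fun s => F (x + s • v) - s * ⟪F' x, v⟫ - L / 2 * s ^ 2 * ‖v‖ ^ 2
  have hg : ∀ s, HasDerivAt g (⟪F' (x + s • v) - F' x, v⟫ - L * s * ‖v‖ ^ 2) s := by
    intro s
    have hline : HasDerivAt (fun s : ℝ => x + s • v) v s := by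
      simpa using ((hasDerivAt_id s).smul_const v).const_add x
    have hF : HasDerivAt (fun s : ℝ => F (x + s • v)) ⟪F' (x + s • v), v⟫ s := by
      exact (hdiff (x + s • v)).comp_hasDerivAt s hline
    refine ((hF.sub ((hasDerivAt_id s).mul_const ⟪F' x, v⟫)).sub
      (((hasDerivAt_pow 2 s).const_mul (L / 2)).mul_const (‖v‖ ^ 2))).congr_deriv ?_
    simp only [inner_sub_left, Nat.cast_ofNat]
    ring
  have hanti : AntitoneOn g (Set.Ici 0) := by
    refine antitoneOn_of_hasDerivWithinAt_nonpos (convex_Ici 0)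
      (fun s _ => (hg s).continuousAt.continuousWithinAt) (fun s _ => (hg s).hasDerivWithinAt) ?_
    intro s hs
    rw [interior_Ici] at hs
    have hlip : ‖F' (x + s • v) - F' x‖ ≤ L * (s * ‖v‖) := by
      simpa [norm_smul, abs_of_pos (Set.mem_Ioi.mp hs)] using hsmooth (x + s • v) x
    nlinarith [real_inner_le_norm (F' (x + s • v) - F' x) v, norm_nonneg v,
      mul_le_mul_of_nonneg_right hlip (norm_nonneg v)]
  have h01 := hanti Set.self_mem_Ici (Set.mem_Ici.mpr zero_le_one) zero_le_one
  simp only [g, zero_smul, one_smul, add_zero, add_sub_cancel, v] at h01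
  linarith

theorem perturbed_gradient_step_le
    (hdiff : ∀ x, HasFDerivAt F (InnerProductSpace.toDualMap ℝ E (F' x) : E →L[ℝ] ℝ) x)
    (hsmooth : ∀ x y, ‖F' x - F' y‖ ≤ L * ‖x - y‖) {η ρ : ℝ} (hL : 0 ≤ L) (hη : 0 ≤ η)
    (hLη : L * η ≤ 1 / 4)
    {x v : E} (hgrad : ‖F' x‖ ≤ ρ) (hv : L * ‖v‖ ≤ ρ) :
    F (x - η • F' x + v) ≤ F x - η / 2 * ‖F' x‖ ^ 2 + 2 * ρ * ‖v‖ := by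
  set g := F' x
  have hinner : ⟪g, -(η • g) + v⟫ ≤ -(η * ‖g‖ ^ 2) + ‖g‖ * ‖v‖ := by
    rw [inner_add_right, inner_neg_right, real_inner_smul_right, real_inner_self_eq_norm_sq]
    linarith [real_inner_le_norm g v]
  have hstep : ‖-(η • g) + v‖ ≤ η * ‖g‖ + ‖v‖ := by
    simpa [norm_smul, abs_of_nonneg hη] using norm_add_le (-(η • g)) v
  have hsq := pow_le_pow_left₀ (norm_nonneg _) hstep 2
  have hdescent := descent_lemma hdiff hsmooth x (x - η • g + v)
  rw [show x - η • g + v - x = -(η • g) + v by abel] at hdescent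
  nlinarith [mul_le_mul_of_nonneg_left hsq hL, norm_nonneg g, norm_nonneg v,
    mul_le_mul_of_nonneg_right hLη (mul_nonneg hη (sq_nonneg ‖g‖)),
    mul_le_mul_of_nonneg_right hLη (mul_nonneg (norm_nonneg g) (norm_nonneg v)),
    mul_le_mul_of_nonneg_right hgrad (norm_nonneg v),
    mul_le_mul_of_nonneg_right hv (norm_nonneg v)]

theorem perturbed_gradient_step_sub_le
    (hdiff : ∀ x, HasFDerivAt F (InnerProductSpace.toDualMap ℝ E (F' x) : E →L[ℝ] ℝ) x)
    (hsmooth : ∀ x y, ‖F' x - F' y‖ ≤ L * ‖x - y‖) {η ρ : ℝ}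
    (hconvex : ∀ x y, F x + ⟪F' x, y - x⟫ + μ / 2 * ‖y - x‖ ^ 2 ≤ F y) (hμ : 0 < μ)
    (hL : 0 ≤ L) (hη : 0 ≤ η) (hLη : L * η ≤ 1 / 4)
    {x v : E} (hgrad : ‖F' x‖ ≤ ρ) (hv : L * ‖v‖ ≤ ρ) (z : E) :
    F (x - η • F' x + v) - F z ≤ (1 - μ * η) * (F x - F z) + 2 * ρ * ‖v‖ := by
  have hPL := mul_le_mul_of_nonneg_left
    (two_mul_sub_le_norm_sq_of_stronglyConvex hconvex hμ x z) (by positivity : (0 : ℝ) ≤ η / 2)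
  linarith [perturbed_gradient_step_le hdiff hsmooth hL hη hLη hgrad hv]

end

theorem le_pow_mul_add_div_of_le_mul_add {a : ℕ → ℝ} {r c : ℝ} {T : ℕ} (hr0 : 0 ≤ r)
    (hr1 : r < 1) (hc : 0 ≤ c) (h : ∀ t < T, a (t + 1) ≤ r * a t + c) :
    a T ≤ r ^ T * a 0 + c / (1 - r) := by
  have h1r : 0 < 1 - r := sub_pos.2 hr1
  suffices ∀ n ≤ T, a n ≤ r ^ n * a 0 + c / (1 - r) from this T le_rfl
  intro n
  induction n with
  | zero => intro; simpa using div_nonneg hc h1r.le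
  | succ n ih =>
    intro hn
    calc a (n + 1) ≤ r * a n + c := h n hn
      _ ≤ r * (r ^ n * a 0 + c / (1 - r)) + c := by gcongr; exact ih (by omega)
      _ = r ^ (n + 1) * a 0 + c / (1 - r) := by field_simp; ring

theorem balance_strongly_convex_deterministic_general
    {E : Type*} [NormedAddCommGroup E] [InnerProductSpace ℝ E]
    {F : E → ℝ} {F' : E → E}
    (hdiff : ∀ x, HasFDerivAt F (InnerProductSpace.toDualMap ℝ E (F' x) : E →L[ℝ] ℝ) x)
    {μ L α ψ ρ γ η : ℝ}
    (hstrongconvex : ∀ x y, F x + ⟪F' x, y - x⟫ + μ / 2 * ‖y - x‖ ^ 2 ≤ F y)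
    (hsmooth : ∀ x y, ‖F' x - F' y‖ ≤ L * ‖x - y‖)
    {wstar : E}
    (hμ : 0 < μ) (hL : 0 < L) (hα1 : α < 1)
    (hψ : 0 < ψ) (hρ : 0 < ρ) (hγ : 0 < γ)
    (hη0 : 0 < η) (hη : η ≤ min (1 / (4 * L)) (1 / μ))
    (hγle : γ ≤ ρ / (L * ψ * (1 - α)))
    {T : ℕ} (w : ℕ → E) (u : ℕ → E)
    (hupdate : ∀ t < T, w (t + 1) = (w t - η • F' (w t)) + (1 - α) • u t)
    (hu : ∀ t < T, ‖u t‖ ≤ γ * ψ)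
    (hρbd : ∀ t < T, ‖F' (w t)‖ ≤ ρ) :
    F (w T) - F wstar ≤
      (1 - μ * η) ^ T * (F (w 0) - F wstar) + 2 * γ * ρ * ψ * (1 - α) / (μ * η) := by
  have h1α : 0 < 1 - α := sub_pos.2 hα1
  have hLη : L * η ≤ 1 / 4 := by
    have := (le_div_iff₀ (by positivity)).1 (hη.trans (min_le_left _ _)); linarith
  have hμη : μ * η ≤ 1 := by
    have := (le_div_iff₀ hμ).1 (hη.trans (min_le_right _ _)); linarith
  have hLperturb : L * ((1 - α) * (γ * ψ)) ≤ ρ := by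
    have := (le_div_iff₀ (by positivity)).1 hγle; linarith
  have hstep : ∀ t < T, F (w (t + 1)) - F wstar ≤
      (1 - μ * η) * (F (w t) - F wstar) + 2 * γ * ρ * ψ * (1 - α) := by
    intro t ht
    have hperturb : ‖(1 - α) • u t‖ ≤ (1 - α) * (γ * ψ) := by
      rw [norm_smul, Real.norm_of_nonneg h1α.le]
      exact mul_le_mul_of_nonneg_left (hu t ht) h1α.le
    have hgap := perturbed_gradient_step_sub_le hdiff hsmooth hstrongconvex hμ hL.le
      hη0.le hLη (hρbd t ht) ((mul_le_mul_of_nonneg_left hperturb hL.le).trans hLperturb) wstar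
    rw [hupdate t ht]
    nlinarith [mul_le_mul_of_nonneg_left hperturb (by positivity : (0 : ℝ) ≤ 2 * ρ)]
  simpa using le_pow_mul_add_div_of_le_mul_add (a := fun t => F (w t) - F wstar)
    (by linarith) (by nlinarith) (by positivity) hstep

/-- Deterministic (exact-gradient) core of Theorem 1: BALANCE with strongly convex
objective converges linearly to a neighborhood of the global minimum. -/
theorem balance_strongly_convex_deterministic
    {E : Type*} [NormedAddCommGroup E] [InnerProductSpace ℝ E]
    {F : E → ℝ} {F' : E → E}
    (hdiff : ∀ x, HasFDerivAt F (InnerProductSpace.toDualMap ℝ E (F' x) : E →L[ℝ] ℝ) x)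
    {μ L α ψ ρ γ η : ℝ}
    (hstrongconvex : ∀ x y, F x + ⟪F' x, y - x⟫ + μ / 2 * ‖y - x‖ ^ 2 ≤ F y)
    (hsmooth : ∀ x y, ‖F' x - F' y‖ ≤ L * ‖x - y‖)
    {wstar : E} (hmin : ∀ x, F wstar ≤ F x)
    (hμ : 0 < μ) (hL : 0 < L) (hα0 : 0 ≤ α) (hα1 : α < 1)
    (hψ : 0 < ψ) (hρ : 0 < ρ) (hγ : 0 < γ)
    (hη0 : 0 < η) (hη : η ≤ min (1 / (4 * L)) (1 / μ))
    (hγle : γ ≤ ρ / (L * ψ * (1 - α)))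
    {T : ℕ} (w : ℕ → E) (u : ℕ → E)
    (hupdate : ∀ t < T, w (t + 1) = (w t - η • F' (w t)) + (1 - α) • u t)
    (hu : ∀ t < T, ‖u t‖ ≤ γ * ψ)
    (hψbd : ∀ t < T, ‖w t - η • F' (w t)‖ ≤ ψ)
    (hρbd : ∀ t < T, ‖F' (w t)‖ ≤ ρ) :
    F (w T) - F wstar ≤
      (1 - μ * η) ^ T * (F (w 0) - F wstar) + 2 * γ * ρ * ψ * (1 - α) / (μ * η) :=
  balance_strongly_convex_deterministic_general hdiff hstrongconvex hsmooth hμ hL hα1 hψ hρ hγ hη0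
    hη hγle w u hupdate hu hρbd
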